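/- arXiv:1611.08777 — 5 statements merged into one kernel-verified Lean document; each statement's English description precedes it below -/
import Mathlib

section
/- Let γ = (γ_1,…,γ_n) be a weak composition and k = max_i γ_i. In the Lascoux atom L_γ ∈ ℤ[β][x_1,…,x_n], the coefficient of the monomial x^γ = x_1^{γ_1}⋯x_n^{γ_n} is 1, and every weak composition δ = (δ_1,…,δ_n) ≠ γ such that x^δ = x_1^{δ_1}⋯x_n^{δ_n} appears with nonzero coefficient in L_γ satisfies: max_i δ_i ≤ k, and at the smallest index i_0 with δ_{i_0} ≠ γ_{i_0} one has δ_{i_0} > γ_{i_0}; moreover the coefficient of x^δ is an integer multiple of β^{|δ|−|γ|}. -/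
open Finset MvPolynomial

/-- The inversion-triple condition on anchor values `b, a, c`:
`b > c ≥ a` or `c ≥ a > b`. -/
def InvTriple (b a c : ℕ) : Prop := (c < b ∧ a ≤ c) ∨ (a ≤ c ∧ b < a)

/-- A set-valued skyline filling of shape `γ` (row `i : Fin n` is the `(i+1)`-st row) with
basement `b_i = i`: box `(i, j)` for `1 ≤ j ≤ γ i` carries a nonempty finite set of positive
integers, box `(i, 0)` is the basement `{i + 1}`, and boxes outside the shape are empty. -/
structure SVFilling (n : ℕ) (γ : Fin n → ℕ) where
  box : Fin n → ℕ → Finset ℕ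
  basement : ∀ i : Fin n, box i 0 = {(i : ℕ) + 1}
  nonempty : ∀ i : Fin n, ∀ j : ℕ, 1 ≤ j → j ≤ γ i → (box i j).Nonempty
  pos : ∀ i : Fin n, ∀ j : ℕ, ∀ e ∈ box i j, 1 ≤ e
  outside : ∀ i : Fin n, ∀ j : ℕ, γ i < j → box i j = ∅

namespace SVFilling

variable {n : ℕ} {γ : Fin n → ℕ}

/-- The anchor (= largest) entry of box `(i, j)`. -/
def anchor (F : SVFilling n γ) (i : Fin n) (j : ℕ) : ℕ := (F.box i j).sup id

/-- Semistandardness conditions (S1)-(S4). -/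
def IsSemistandard (F : SVFilling n γ) : Prop :=
  (∀ j : ℕ, 1 ≤ j → ∀ i i' : Fin n, i ≠ i' → ∀ e : ℕ, e ∈ F.box i j → e ∉ F.box i' j) ∧
  (∀ i : Fin n, ∀ j : ℕ, 1 ≤ j → j ≤ γ i →
      ∀ a ∈ F.box i (j - 1), ∀ b ∈ F.box i j, b ≤ a) ∧
  (∀ i i' : Fin n, i < i' →
      (γ i' ≤ γ i → ∀ m : ℕ, m + 1 ≤ γ i' →
        InvTriple (F.anchor i' (m + 1)) (F.anchor i (m + 1)) (F.anchor i m)) ∧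
      (γ i < γ i' → ∀ m : ℕ, m ≤ γ i → m + 1 ≤ γ i' →
        InvTriple (F.anchor i m) (F.anchor i' (m + 1)) (F.anchor i' m))) ∧
  (∀ i : Fin n, ∀ j : ℕ, 1 ≤ j → j ≤ γ i → ∀ e ∈ F.box i j, e ≠ F.anchor i j →
      ∀ i' : Fin n, i' < i → j ≤ γ i' →
        ¬ (e < F.anchor i' j ∧ (j = γ i' ∨ F.anchor i' (j + 1) ≤ e)))

/-- `F.content v` is the number of (non-basement) boxes of `F` containing the value `v`. -/
def content (F : SVFilling n γ) (v : ℕ) : ℕ :=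
  ∑ i : Fin n, ((Finset.Icc 1 (γ i)).filter (fun j => v ∈ F.box i j)).card

/-- `|F|`, the total number of entries of `F` (with multiplicity over boxes). -/
def size (F : SVFilling n γ) : ℕ :=
  ∑ i : Fin n, ∑ j ∈ Finset.Icc 1 (γ i), (F.box i j).card

/-- `F` has content the weak composition `δ` with `n` parts. -/
def HasContent (F : SVFilling n γ) (δ : Fin n → ℕ) : Prop :=
  (∀ i : Fin n, F.content ((i : ℕ) + 1) = δ i) ∧ ∀ v : ℕ, n < v → F.content v = 0

end SVFilling

namespace SVFilling

variable {n : ℕ} {γ : Fin n → ℕ}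

/-- Every entry of row `i` is at most `i+1`. -/
lemma entry_le (F : SVFilling n γ) (hF : F.IsSemistandard) (i : Fin n) :
    ∀ j : ℕ, ∀ e ∈ F.box i j, e ≤ (i : ℕ) + 1 := by
  intro j
  induction j with
  | zero => intro e he; rw [F.basement] at he; simp at he; omega
  | succ j ih =>
    intro e he
    by_cases h : j + 1 ≤ γ i
    · obtain ⟨a, ha⟩ : (F.box i j).Nonempty := by
        cases j with
        | zero => rw [F.basement]; exact ⟨_, Finset.mem_singleton_self _⟩
        | succ j' => exact F.nonempty i _ (by omega) (by omega)
      have h2 := hF.2.1 i (j + 1) (by omega) h a (by simpa using ha) e he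
      exact le_trans h2 (ih a ha)
    · rw [F.outside i _ (by omega)] at he; simp at he

lemma box_subset (F : SVFilling n γ) (hF : F.IsSemistandard) (i : Fin n) (j : ℕ) :
    F.box i j ⊆ Finset.Icc 1 ((i : ℕ) + 1) := by
  intro e he
  exact Finset.mem_Icc.2 ⟨F.pos i j e he, F.entry_le hF i j e he⟩

/-- Content of value larger than row bound vanishes rowwise; global counting lemma. -/
lemma content_sum (F : SVFilling n γ) (m : ℕ) :
    ∑ v ∈ Finset.Icc 1 m, F.content v =
      ∑ i : Fin n, ∑ j ∈ Finset.Icc 1 (γ i),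
        ((Finset.Icc 1 m).filter (fun v => v ∈ F.box i j)).card := by
  unfold content
  rw [Finset.sum_comm]
  refine Finset.sum_congr rfl fun i _ => ?_
  simp only [Finset.card_filter]
  rw [Finset.sum_comm]

/-- `content v ≤ max γ`: a value appears at most once per column. -/
lemma content_le (F : SVFilling n γ) (hF : F.IsSemistandard) (v : ℕ) :
    F.content v ≤ Finset.univ.sup γ := by
  classical
  set K := Finset.univ.sup γ with hK
  unfold content
  have h1 : ∀ i : Fin n,
      ((Finset.Icc 1 (γ i)).filter (fun j => v ∈ F.box i j)).card
        = ∑ j ∈ Finset.Icc 1 (γ i), (if v ∈ F.box i j then 1 else 0) := by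
    intro i; exact Finset.card_filter _ _
  calc ∑ i : Fin n, ((Finset.Icc 1 (γ i)).filter (fun j => v ∈ F.box i j)).card
      = ∑ i : Fin n, ∑ j ∈ Finset.Icc 1 (γ i), (if v ∈ F.box i j then 1 else 0) := by
        exact Finset.sum_congr rfl fun i _ => h1 i
    _ ≤ ∑ i : Fin n, ∑ j ∈ Finset.Icc 1 K, (if v ∈ F.box i j then 1 else 0) := by
        refine Finset.sum_le_sum fun i _ => ?_
        refine Finset.sum_le_sum_of_subset (Finset.Icc_subset_Icc_right ?_)
        exact Finset.le_sup (Finset.mem_univ i)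
    _ = ∑ j ∈ Finset.Icc 1 K, ∑ i : Fin n, (if v ∈ F.box i j then 1 else 0) :=
        Finset.sum_comm
    _ ≤ ∑ j ∈ Finset.Icc 1 K, 1 := by
        refine Finset.sum_le_sum fun j hj => ?_
        rw [← Finset.card_filter]
        refine Finset.card_le_one.2 fun i hi i' hi' => ?_
        by_contra hne
        exact hF.1 j (Finset.mem_Icc.1 hj).1 i i' hne v (Finset.mem_filter.1 hi).2
          (Finset.mem_filter.1 hi').2
    _ = K := by simp

end SVFilling

namespace SVFilling

variable {n : ℕ} {γ : Fin n → ℕ}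

lemma image_filter_lt (m : ℕ) (hm : m ≤ n) :
    (Finset.univ.filter (fun i : Fin n => (i : ℕ) < m)).image (fun i : Fin n => (i : ℕ) + 1)
      = Finset.Icc 1 m := by
  ext v
  simp only [Finset.mem_image, Finset.mem_filter, Finset.mem_univ, true_and, Finset.mem_Icc]
  constructor
  · rintro ⟨i, hi, rfl⟩; omega
  · rintro ⟨h1, h2⟩; exact ⟨⟨v - 1, by omega⟩, by simp; omega, by simp; omega⟩

lemma sum_Icc_one_eq {M : Type*} [AddCommMonoid M] (m : ℕ) (hm : m ≤ n) (f : ℕ → M) :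
    ∑ v ∈ Finset.Icc 1 m, f v =
      ∑ i ∈ Finset.univ.filter (fun i : Fin n => (i : ℕ) < m), f ((i : ℕ) + 1) := by
  rw [← image_filter_lt m hm, Finset.sum_image]
  intro i _ i' _ h
  exact Fin.ext (by simp only at h; omega)

/-- Prefix-sum inequality: entries ≤ m, counted in rows < m, dominate the shape. -/
lemma prefix_le (F : SVFilling n γ) (hF : F.IsSemistandard) (m : ℕ) :
    ∑ i ∈ Finset.univ.filter (fun i : Fin n => (i : ℕ) < m), γ i
      ≤ ∑ v ∈ Finset.Icc 1 m, F.content v := by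
  rw [F.content_sum m]
  calc ∑ i ∈ Finset.univ.filter (fun i : Fin n => (i : ℕ) < m), γ i
      ≤ ∑ i ∈ Finset.univ.filter (fun i : Fin n => (i : ℕ) < m),
          ∑ j ∈ Finset.Icc 1 (γ i),
            ((Finset.Icc 1 m).filter (fun v => v ∈ F.box i j)).card := by
        refine Finset.sum_le_sum fun i hi => ?_
        have him : (i : ℕ) < m := (Finset.mem_filter.1 hi).2
        calc γ i = ∑ j ∈ Finset.Icc 1 (γ i), 1 := by simp
          _ ≤ _ := by
            refine Finset.sum_le_sum fun j hj => ?_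
            have hj' := Finset.mem_Icc.1 hj
            obtain ⟨e, he⟩ := F.nonempty i j hj'.1 hj'.2
            refine Finset.card_pos.2 ⟨e, Finset.mem_filter.2 ⟨Finset.mem_Icc.2 ⟨F.pos i j e he, ?_⟩, he⟩⟩
            exact le_trans (F.entry_le hF i j e he) (by omega)
    _ ≤ _ := Finset.sum_le_sum_of_subset (Finset.filter_subset _ _)

/-- Equality analysis: if content equals the shape on the relevant prefix sums, boxes
in rows of index ≥ m have no entries ≤ m. -/
lemma rows_no_small (F : SVFilling n γ) (hF : F.IsSemistandard)
    (hc : ∀ i : Fin n, F.content ((i : ℕ) + 1) = γ i) (m : ℕ) (hm : m ≤ n) :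
    ∀ i : Fin n, m ≤ (i : ℕ) → ∀ j ∈ Finset.Icc 1 (γ i),
      ((Finset.Icc 1 m).filter (fun v => v ∈ F.box i j)).card = 0 := by
  classical
  have heq : ∑ v ∈ Finset.Icc 1 m, F.content v
      = ∑ i ∈ Finset.univ.filter (fun i : Fin n => (i : ℕ) < m), γ i := by
    rw [sum_Icc_one_eq m hm]
    exact Finset.sum_congr rfl fun i _ => hc i
  set g : Fin n → ℕ := fun i => ∑ j ∈ Finset.Icc 1 (γ i),
      ((Finset.Icc 1 m).filter (fun v => v ∈ F.box i j)).card with hg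
  set l : Fin n → ℕ := fun i => if (i : ℕ) < m then γ i else 0 with hl
  have hle : ∀ i ∈ Finset.univ, l i ≤ g i := by
    intro i _
    by_cases h : (i : ℕ) < m
    · simp only [hl, hg, if_pos h]
      calc γ i = ∑ j ∈ Finset.Icc 1 (γ i), 1 := by simp
        _ ≤ _ := by
          refine Finset.sum_le_sum fun j hj => ?_
          have hj' := Finset.mem_Icc.1 hj
          obtain ⟨e, he⟩ := F.nonempty i j hj'.1 hj'.2
          refine Finset.card_pos.2 ⟨e, Finset.mem_filter.2 ⟨Finset.mem_Icc.2 ⟨F.pos i j e he, ?_⟩, he⟩⟩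
          exact le_trans (F.entry_le hF i j e he) (by omega)
    · simp [hl, if_neg h]
  have hsum : ∑ i : Fin n, l i = ∑ i : Fin n, g i := by
    have h1 : ∑ i : Fin n, l i
        = ∑ i ∈ Finset.univ.filter (fun i : Fin n => (i : ℕ) < m), γ i := by
      rw [Finset.sum_filter]
    have h2 : ∑ i : Fin n, g i = ∑ v ∈ Finset.Icc 1 m, F.content v :=
      (F.content_sum m).symm
    rw [h1, h2, heq]
  have hall : ∀ i ∈ Finset.univ, l i = g i :=
    (Finset.sum_eq_sum_iff_of_le hle).1 hsum
  intro i hi j hj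
  have h0 : g i = 0 := by
    have h := (hall i (Finset.mem_univ i)).symm
    simp only [hl] at h
    rwa [if_neg (by omega)] at h
  exact (Finset.sum_eq_zero_iff.1 h0) j hj

end SVFilling

namespace SVFilling

variable {n : ℕ} {γ : Fin n → ℕ}

lemma filter_Icc_n (F : SVFilling n γ) (hF : F.IsSemistandard) (i : Fin n) (j : ℕ) :
    (Finset.Icc 1 n).filter (fun v => v ∈ F.box i j) = F.box i j := by
  rw [Finset.filter_mem_eq_inter, Finset.inter_eq_right]
  exact (F.box_subset hF i j).trans (Finset.Icc_subset_Icc_right i.isLt)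

lemma content_eq_zero (F : SVFilling n γ) (hF : F.IsSemistandard) (v : ℕ) (hv : n < v) :
    F.content v = 0 := by
  unfold content
  refine Finset.sum_eq_zero fun i _ => ?_
  rw [Finset.card_eq_zero, Finset.filter_eq_empty_iff]
  intro j _ hmem
  have := F.entry_le hF i j v hmem
  omega

/-- Size equals total content over values `1..n`. -/
lemma size_eq (F : SVFilling n γ) (hF : F.IsSemistandard) :
    F.size = ∑ i : Fin n, F.content ((i : ℕ) + 1) := by
  have h1 : ∑ v ∈ Finset.Icc 1 n, F.content v = ∑ i : Fin n, F.content ((i : ℕ) + 1) := by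
    rw [sum_Icc_one_eq n le_rfl]
    refine Finset.sum_congr ?_ fun _ _ => rfl
    rw [Finset.filter_true_of_mem fun i _ => i.isLt]
  rw [← h1, F.content_sum n]
  unfold size
  refine Finset.sum_congr rfl fun i _ => Finset.sum_congr rfl fun j _ => ?_
  rw [F.filter_Icc_n hF]

/-- Equality analysis: row sums of small-entry counts. -/
lemma row_counts (F : SVFilling n γ) (hF : F.IsSemistandard)
    (hc : ∀ i : Fin n, F.content ((i : ℕ) + 1) = γ i) (m : ℕ) (hm : m ≤ n) :
    ∀ i : Fin n, ∑ j ∈ Finset.Icc 1 (γ i),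
        ((Finset.Icc 1 m).filter (fun v => v ∈ F.box i j)).card
      = if (i : ℕ) < m then γ i else 0 := by
  classical
  have heq : ∑ v ∈ Finset.Icc 1 m, F.content v
      = ∑ i ∈ Finset.univ.filter (fun i : Fin n => (i : ℕ) < m), γ i := by
    rw [sum_Icc_one_eq m hm]
    exact Finset.sum_congr rfl fun i _ => hc i
  set g : Fin n → ℕ := fun i => ∑ j ∈ Finset.Icc 1 (γ i),
      ((Finset.Icc 1 m).filter (fun v => v ∈ F.box i j)).card with hg
  set l : Fin n → ℕ := fun i => if (i : ℕ) < m then γ i else 0 with hl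
  have hle : ∀ i ∈ Finset.univ, l i ≤ g i := by
    intro i _
    by_cases h : (i : ℕ) < m
    · simp only [hl, hg, if_pos h]
      calc γ i = ∑ j ∈ Finset.Icc 1 (γ i), 1 := by simp
        _ ≤ _ := by
          refine Finset.sum_le_sum fun j hj => ?_
          have hj' := Finset.mem_Icc.1 hj
          obtain ⟨e, he⟩ := F.nonempty i j hj'.1 hj'.2
          refine Finset.card_pos.2
            ⟨e, Finset.mem_filter.2 ⟨Finset.mem_Icc.2 ⟨F.pos i j e he, ?_⟩, he⟩⟩
          exact le_trans (F.entry_le hF i j e he) (by omega)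
    · simp [hl, if_neg h]
  have hsum : ∑ i : Fin n, l i = ∑ i : Fin n, g i := by
    have h1 : ∑ i : Fin n, l i
        = ∑ i ∈ Finset.univ.filter (fun i : Fin n => (i : ℕ) < m), γ i := by
      rw [Finset.sum_filter]
    rw [h1, ← heq, F.content_sum m]
  intro i
  exact ((Finset.sum_eq_sum_iff_of_le hle).1 hsum i (Finset.mem_univ i)).symm

/-- If the content equals `γ`, every box inside the shape is `{i+1}`. -/
lemma box_eq_of_content (F : SVFilling n γ) (hF : F.IsSemistandard)
    (hc : ∀ i : Fin n, F.content ((i : ℕ) + 1) = γ i) :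
    ∀ i : Fin n, ∀ j ∈ Finset.Icc 1 (γ i), F.box i j = {(i : ℕ) + 1} := by
  classical
  intro i j hj
  -- Step 1: box is a singleton.
  have hn := F.row_counts hF hc n le_rfl i
  rw [if_pos i.isLt] at hn
  have hsing : (F.box i j).card = 1 := by
    have hle : ∀ j' ∈ Finset.Icc 1 (γ i),
        1 ≤ ((Finset.Icc 1 n).filter (fun v => v ∈ F.box i j')).card := by
      intro j' hj'
      have hj'' := Finset.mem_Icc.1 hj'
      obtain ⟨e, he⟩ := F.nonempty i j' hj''.1 hj''.2
      refine Finset.card_pos.2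
        ⟨e, Finset.mem_filter.2 ⟨Finset.mem_Icc.2 ⟨F.pos i j' e he, ?_⟩, he⟩⟩
      exact le_trans (F.entry_le hF i j' e he) i.isLt
    have hsum : ∑ j' ∈ Finset.Icc 1 (γ i), (1 : ℕ)
        = ∑ j' ∈ Finset.Icc 1 (γ i),
            ((Finset.Icc 1 n).filter (fun v => v ∈ F.box i j')).card := by
      rw [hn]; simp
    have := (Finset.sum_eq_sum_iff_of_le hle).1 hsum j hj
    rw [F.filter_Icc_n hF] at this
    omega
  -- Step 2: no entries ≤ i.
  have hzero := F.row_counts hF hc (i : ℕ) (le_of_lt i.isLt) i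
  rw [if_neg (by omega)] at hzero
  have hz : ((Finset.Icc 1 (i : ℕ)).filter (fun v => v ∈ F.box i j)).card = 0 :=
    Finset.sum_eq_zero_iff.1 hzero j hj
  obtain ⟨e, he⟩ := Finset.card_eq_one.1 hsing
  have hmem : e ∈ F.box i j := by rw [he]; exact Finset.mem_singleton_self e
  have h1 : 1 ≤ e := F.pos i j e hmem
  have h2 : e ≤ (i : ℕ) + 1 := F.entry_le hF i j e hmem
  have h3 : ¬ e ≤ (i : ℕ) := by
    intro h
    rw [Finset.card_eq_zero, Finset.filter_eq_empty_iff] at hz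
    exact hz (Finset.mem_Icc.2 ⟨h1, h⟩) hmem
  rw [he]
  congr 1
  omega

end SVFilling

namespace SVFilling

variable {n : ℕ} {γ : Fin n → ℕ}

lemma ext' {F G : SVFilling n γ} (h : ∀ i j, F.box i j = G.box i j) : F = G := by
  cases F; cases G
  simp only [mk.injEq]
  funext i j
  exact h i j

/-- The unique minimal filling: every box in the shape is `{i+1}`. -/
def superF (n : ℕ) (γ : Fin n → ℕ) : SVFilling n γ where
  box i j := if j ≤ γ i then {(i : ℕ) + 1} else ∅
  basement i := by simp
  nonempty i j _ hj := ⟨(i : ℕ) + 1, by simp [hj]⟩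
  pos i j e he := by
    by_cases h : j ≤ γ i
    · simp only [if_pos h, Finset.mem_singleton] at he; omega
    · simp only [if_neg h, Finset.notMem_empty] at he
  outside i j hj := by simp only [if_neg (show ¬ j ≤ γ i by omega)]

lemma superF_anchor (i : Fin n) (j : ℕ) (hj : j ≤ γ i) :
    (superF n γ).anchor i j = (i : ℕ) + 1 := by
  unfold anchor superF
  simp [if_pos hj]

lemma superF_semistandard : (superF n γ).IsSemistandard := by
  refine ⟨?_, ?_, ?_, ?_⟩
  · intro j _ i i' hne e he he'
    unfold superF at he he'
    simp only at he he'
    split_ifs at he he' with h1 h2 <;> simp_all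
    exact hne (Fin.ext (by omega))
  · intro i j h1 h2 a ha b hb
    unfold superF at ha hb
    simp only at ha hb
    rw [if_pos (by omega)] at ha
    rw [if_pos h2] at hb
    simp_all
  · intro i i' hii'
    have hlt : (i : ℕ) < (i' : ℕ) := hii'
    constructor
    · intro hγ m hm
      rw [superF_anchor i' (m+1) hm, superF_anchor i (m+1) (by omega),
        superF_anchor i m (by omega)]
      exact Or.inl ⟨by omega, le_rfl⟩
    · intro hγ m hm hm'
      rw [superF_anchor i m hm, superF_anchor i' (m+1) hm', superF_anchor i' m (by omega)]
      exact Or.inr ⟨le_rfl, by omega⟩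
  · intro i j h1 h2 e he hne i' _ _
    exfalso
    apply hne
    unfold superF at he
    simp only at he
    rw [if_pos h2, Finset.mem_singleton] at he
    rw [he, superF_anchor i j h2]

lemma superF_content (i : Fin n) : (superF n γ).content ((i : ℕ) + 1) = γ i := by
  classical
  unfold content
  rw [Finset.sum_eq_single i]
  · rw [Finset.filter_true_of_mem, Nat.card_Icc]
    · omega
    · intro j hj
      have := (Finset.mem_Icc.1 hj).2
      unfold superF
      simp [if_pos this]
  · intro i' _ hne
    rw [Finset.card_eq_zero, Finset.filter_eq_empty_iff]
    intro j hj hmem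
    unfold superF at hmem
    simp only at hmem
    rw [if_pos (Finset.mem_Icc.1 hj).2, Finset.mem_singleton] at hmem
    exact hne (Fin.ext (by omega))
  · intro h
    exact absurd (Finset.mem_univ i) h

lemma superF_size : (superF n γ).size = ∑ i, γ i := by
  rw [size_eq _ superF_semistandard]
  exact Finset.sum_congr rfl fun i _ => superF_content i

instance finite_semistandard : Finite {F : SVFilling n γ // F.IsSemistandard} := by
  classical
  set K := Finset.univ.sup γ with hK
  have : Function.Injective
      (fun F : {F : SVFilling n γ // F.IsSemistandard} =>
        fun (i : Fin n) (j : Fin (K + 1)) =>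
          (F.1.box i (j : ℕ)).image (fun e => (⟨e % (n + 2), Nat.mod_lt _ (by omega)⟩ :
            Fin (n + 2)))) := by
    intro F G h
    have hbox : ∀ (H : {F : SVFilling n γ // F.IsSemistandard}) (i : Fin n) (j : ℕ),
        ((H.1.box i j).image (fun e => (⟨e % (n + 2), Nat.mod_lt _ (by omega)⟩ :
          Fin (n + 2)))).image (fun x : Fin (n + 2) => (x : ℕ)) = H.1.box i j := by
      intro H i j
      rw [Finset.image_image]
      refine Finset.image_congr ?_ |>.trans (Finset.image_id)
      intro e he
      have h1 : e ≤ (i : ℕ) + 1 := H.1.entry_le H.2 i j e he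
      simp only [Function.comp]
      exact Nat.mod_eq_of_lt (by omega)
    refine Subtype.ext (ext' fun i j => ?_)
    by_cases hj : j ≤ K
    · have := congrFun (congrFun h i) ⟨j, by omega⟩
      dsimp only at this
      calc F.1.box i j = _ := (hbox F i j).symm
        _ = _ := by rw [this]
        _ = G.1.box i j := hbox G i j
    · have hγ : γ i < j := by
        have : γ i ≤ K := Finset.le_sup (Finset.mem_univ i)
        omega
      rw [F.1.outside i j hγ, G.1.outside i j hγ]
  exact Finite.of_injective _ this

end SVFilling


/-- The (combinatorial) Lascoux atom `L_γ ∈ ℤ[β][x_1, …, x_n]`, where `β` is the polynomial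
variable of `ℤ[β] = Polynomial ℤ`. -/
noncomputable def Lascoux (n : ℕ) (γ : Fin n → ℕ) : MvPolynomial (Fin n) (Polynomial ℤ) :=
  ∑ᶠ F : {F : SVFilling n γ // F.IsSemistandard},
    MvPolynomial.monomial
      (Finsupp.equivFunOnFinite.symm
        (fun i : Fin n => (F : SVFilling n γ).content ((i : ℕ) + 1)))
      (Polynomial.X ^ ((F : SVFilling n γ).size - ∑ i, γ i))

/-- In the Lascoux atom `L_γ`, the monomial `x^γ` has coefficient `1`; and
any weak composition `δ ≠ γ` whose monomial `x^δ` has nonzero coefficient in `L_γ` satisfies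
`max_i δ_i ≤ k = max_i γ_i`, is lexicographically larger than `γ` (at the first index where
they differ, `δ` is bigger), and its coefficient is an integer multiple of `β^(|δ|-|γ|)`. -/
theorem stmt0 (n : ℕ) (hn : 1 ≤ n) (γ : Fin n → ℕ) :
    (Lascoux n γ).coeff (Finsupp.equivFunOnFinite.symm γ) = 1 ∧
    ∀ δ : Fin n → ℕ, δ ≠ γ →
      (Lascoux n γ).coeff (Finsupp.equivFunOnFinite.symm δ) ≠ 0 →
        (∀ i : Fin n, δ i ≤ Finset.univ.sup γ) ∧
        (∀ i0 : Fin n, δ i0 ≠ γ i0 → (∀ i : Fin n, i < i0 → δ i = γ i) → γ i0 < δ i0) ∧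
        (∃ m : ℤ, (Lascoux n γ).coeff (Finsupp.equivFunOnFinite.symm δ) =
          Polynomial.C m * Polynomial.X ^ (∑ i, δ i - ∑ i, γ i)) := by
  classical
  have : Fintype {F : SVFilling n γ // F.IsSemistandard} := Fintype.ofFinite _
  have hL : ∀ d : Fin n →₀ ℕ, (Lascoux n γ).coeff d =
      ∑ F : {F : SVFilling n γ // F.IsSemistandard},
        if (Finsupp.equivFunOnFinite.symm
            (fun i : Fin n => (F : SVFilling n γ).content ((i : ℕ) + 1))) = d
        then Polynomial.X ^ ((F : SVFilling n γ).size - ∑ i, γ i) else (0 : Polynomial ℤ) := by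
    intro d
    rw [Lascoux, finsum_eq_sum_of_fintype, MvPolynomial.coeff_sum]
    exact Finset.sum_congr rfl fun F _ => MvPolynomial.coeff_monomial _ _ _
  have hcond : ∀ (F : {F : SVFilling n γ // F.IsSemistandard}) (δ : Fin n → ℕ),
      (Finsupp.equivFunOnFinite.symm
          (fun i : Fin n => (F : SVFilling n γ).content ((i : ℕ) + 1))
        = Finsupp.equivFunOnFinite.symm δ)
      ↔ ∀ i : Fin n, (F : SVFilling n γ).content ((i : ℕ) + 1) = δ i := by
    intro F δ
    rw [(Finsupp.equivFunOnFinite.symm.injective).eq_iff]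
    exact funext_iff
  set F0 : {F : SVFilling n γ // F.IsSemistandard} :=
    ⟨SVFilling.superF n γ, SVFilling.superF_semistandard⟩ with hF0
  constructor
  · rw [hL]
    rw [Finset.sum_eq_single_of_mem F0 (Finset.mem_univ _)]
    · rw [if_pos ((hcond F0 γ).2 fun i => SVFilling.superF_content i)]
      rw [show (F0 : SVFilling n γ).size = ∑ i, γ i from SVFilling.superF_size]
      simp
    · intro F _ hne
      rw [if_neg]
      intro hc
      apply hne
      have hc' := (hcond F γ).1 hc
      have hbox := (F : SVFilling n γ).box_eq_of_content F.2 hc'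
      refine Subtype.ext (SVFilling.ext' fun i j => ?_)
      rcases Nat.eq_zero_or_pos j with rfl | hj
      · rw [(F : SVFilling n γ).basement, (SVFilling.superF n γ).basement]
      · by_cases hjγ : j ≤ γ i
        · rw [hbox i j (Finset.mem_Icc.2 ⟨hj, hjγ⟩)]
          show _ = (if j ≤ γ i then _ else _)
          rw [if_pos hjγ]
        · rw [(F : SVFilling n γ).outside i j (by omega),
            (SVFilling.superF n γ).outside i j (by omega)]
  · intro δ hδγ hne0
    obtain ⟨F, _, hFne⟩ := Finset.exists_ne_zero_of_sum_ne_zero (by rw [hL] at hne0; exact hne0)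
    have hFc : ∀ i : Fin n, (F : SVFilling n γ).content ((i : ℕ) + 1) = δ i := by
      by_contra h
      exact hFne (if_neg fun hc => h ((hcond F δ).1 hc))
    refine ⟨?_, ?_, ?_⟩
    · intro i
      rw [← hFc i]
      exact (F : SVFilling n γ).content_le F.2 _
    · intro i0 hne hpre
      have hm : (i0 : ℕ) + 1 ≤ n := i0.isLt
      have h1 := (F : SVFilling n γ).prefix_le F.2 ((i0 : ℕ) + 1)
      rw [SVFilling.sum_Icc_one_eq ((i0 : ℕ) + 1) hm] at h1
      have h2 : ∑ i ∈ Finset.univ.filter (fun i : Fin n => (i : ℕ) < (i0 : ℕ) + 1),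
          (F : SVFilling n γ).content ((i : ℕ) + 1)
          = ∑ i ∈ Finset.univ.filter (fun i : Fin n => (i : ℕ) < (i0 : ℕ) + 1), δ i :=
        Finset.sum_congr rfl fun i _ => hFc i
      rw [h2] at h1
      by_contra hlt
      have hδlt : δ i0 < γ i0 := by omega
      have : ∑ i ∈ Finset.univ.filter (fun i : Fin n => (i : ℕ) < (i0 : ℕ) + 1), δ i
          < ∑ i ∈ Finset.univ.filter (fun i : Fin n => (i : ℕ) < (i0 : ℕ) + 1), γ i := by
        refine Finset.sum_lt_sum (fun i hi => ?_) ⟨i0, Finset.mem_filter.2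
          ⟨Finset.mem_univ _, by omega⟩, hδlt⟩
        have hile : (i : ℕ) < (i0 : ℕ) + 1 := (Finset.mem_filter.1 hi).2
        rcases eq_or_ne i i0 with rfl | hne'
        · exact le_of_lt hδlt
        · rw [hpre i (by
            have : (i : ℕ) ≠ (i0 : ℕ) := fun h => hne' (Fin.ext h)
            exact Fin.lt_def.2 (by omega))]
      omega
    · refine ⟨((Finset.univ.filter (fun F : {F : SVFilling n γ // F.IsSemistandard} =>
        (Finsupp.equivFunOnFinite.symm
          (fun i : Fin n => (F : SVFilling n γ).content ((i : ℕ) + 1))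
          = Finsupp.equivFunOnFinite.symm δ))).card : ℤ), ?_⟩
      rw [hL, ← Finset.sum_filter]
      have hterm : ∀ G ∈ Finset.univ.filter (fun F : {F : SVFilling n γ // F.IsSemistandard} =>
          (Finsupp.equivFunOnFinite.symm
            (fun i : Fin n => (F : SVFilling n γ).content ((i : ℕ) + 1))
            = Finsupp.equivFunOnFinite.symm δ)),
          (Polynomial.X : Polynomial ℤ) ^ ((G : SVFilling n γ).size - ∑ i, γ i)
            = (Polynomial.X : Polynomial ℤ) ^ (∑ i, δ i - ∑ i, γ i) := by
        intro G hG
        have hGc := (hcond G δ).1 (Finset.mem_filter.1 hG).2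
        congr 1
        rw [(G : SVFilling n γ).size_eq G.2]
        congr 1
        exact Finset.sum_congr rfl fun i _ => hGc i
      rw [Finset.sum_congr rfl hterm, Finset.sum_const, nsmul_eq_mul]
      simp [Polynomial.C_eq_natCast]
end

section
/- Let γ = (γ_1,…,γ_n) be a weak composition. A filling F ∈ SetSkyFill(γ) has content γ if and only if F(i,j) = {i} for every box (i,j) with 1 ≤ j ≤ γ_i. In particular, there is exactly one element of SetSkyFill(γ) whose content equals γ. -/
open Finset MvPolynomial

/-!
By (S2) the entries of a row never exceed its basement, so row `i` only uses the values
`1, …, i + 1`. If the content is `γ`, induct upwards on the rows: once rows `k < i` are known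
to be constantly `{k + 1}`, row `k` alone already accounts for all `γ k` occurrences of
`k + 1`, so no box of row `i` contains a value `≤ i`, and each (nonempty) box of row `i`
is `{i + 1}`. The filling with these boxes satisfies (S1)–(S4) by inspection.
-/

namespace SVFilling

variable {n : ℕ} {γ : Fin n → ℕ}

lemma box_nonempty_of_le (F : SVFilling n γ) {i : Fin n} {j : ℕ} (hj : j ≤ γ i) :
    (F.box i j).Nonempty := by
  rcases Nat.eq_zero_or_pos j with rfl | hj0
  · simp [F.basement]
  · exact F.nonempty i j hj0 hj

lemma le_of_mem_box (F : SVFilling n γ) (hF : F.IsSemistandard) {i : Fin n} :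
    ∀ {j : ℕ}, j ≤ γ i → ∀ e ∈ F.box i j, e ≤ (i : ℕ) + 1
  | 0, _, e, he => by simp_all [F.basement]
  | j + 1, hj, e, he => by
    obtain ⟨a, ha⟩ := F.box_nonempty_of_le (i := i) (j := j) (by omega)
    exact (hF.2.1 i (j + 1) le_add_self hj a ha e he).trans (le_of_mem_box F hF (by omega) a ha)

lemma ext_of_box_eq {F G : SVFilling n γ}
    (h : ∀ i : Fin n, ∀ j : ℕ, 1 ≤ j → j ≤ γ i → F.box i j = G.box i j) : F = G := by
  have hbox : F.box = G.box := by
    ext1 i; ext1 j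
    rcases Nat.eq_zero_or_pos j with rfl | hj0
    · rw [F.basement, G.basement]
    by_cases hj : j ≤ γ i
    · exact h i j hj0 hj
    · rw [F.outside i j (by omega), G.outside i j (by omega)]
  cases F; cases G
  congr

lemma not_mem_box_of_content_le (F : SVFilling n γ) {v : ℕ} {k i : Fin n} (hki : k ≠ i)
    (hrow : ∀ j, 1 ≤ j → j ≤ γ k → v ∈ F.box k j) (hv : F.content v ≤ γ k)
    {j : ℕ} (hj1 : 1 ≤ j) (hj : j ≤ γ i) : v ∉ F.box i j := by
  intro hvij
  set occ : Fin n → ℕ := fun r => ((Icc 1 (γ r)).filter (fun j => v ∈ F.box r j)).card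
  have hk : occ k = γ k := by
    simp only [occ, filter_true_of_mem fun j hj => hrow j (mem_Icc.1 hj).1 (mem_Icc.1 hj).2,
      Nat.card_Icc, Nat.add_sub_cancel]
  have hi : 0 < occ i := card_pos.2 ⟨j, mem_filter.2 ⟨mem_Icc.2 ⟨hj1, hj⟩, hvij⟩⟩
  have : occ k + occ i ≤ F.content v := by
    rw [← sum_pair hki]
    exact sum_le_sum_of_subset (subset_univ _)
  omega

theorem box_eq_singleton_of_hasContent (F : SVFilling n γ) (hF : F.IsSemistandard)
    (hc : F.HasContent γ) :
    ∀ i : Fin n, ∀ j : ℕ, 1 ≤ j → j ≤ γ i → F.box i j = {(i : ℕ) + 1} := by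
  intro i
  induction i using WellFoundedLT.induction with | ind i ih
  intro j hj1 hj
  obtain ⟨a, ha⟩ := F.nonempty i j hj1 hj
  suffices hsub : F.box i j ⊆ {(i : ℕ) + 1} from
    (subset_singleton_iff.1 hsub).resolve_left (ne_empty_of_mem ha)
  intro e he
  have hei : e ≤ (i : ℕ) + 1 := F.le_of_mem_box hF hj e he
  rw [mem_singleton]
  by_contra hne
  have hklt : e - 1 < (i : ℕ) := by have := F.pos i j e he; omega
  set k : Fin n := ⟨e - 1, hklt.trans i.isLt⟩
  have hek : (k : ℕ) + 1 = e := by have := F.pos i j e he; simp [k]; omega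
  refine F.not_mem_box_of_content_le (v := e) (k := k) (ne_of_lt hklt) (fun j' hj1' hj' => ?_)
    (hek ▸ (hc.1 k).le) hj1 hj he
  rw [ih k hklt j' hj1' hj', hek, mem_singleton]

lemma content_eq_of_box_eq_singleton (F : SVFilling n γ)
    (h : ∀ i : Fin n, ∀ j : ℕ, 1 ≤ j → j ≤ γ i → F.box i j = {(i : ℕ) + 1}) (v : ℕ) :
    F.content v = ∑ i : Fin n, if v = (i : ℕ) + 1 then γ i else 0 := by
  refine sum_congr rfl fun i _ => ?_
  rw [filter_congr fun j hj => by rw [h i j (mem_Icc.1 hj).1 (mem_Icc.1 hj).2, mem_singleton]]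
  split_ifs with hv <;> simp [hv]

theorem hasContent_of_box_eq_singleton (F : SVFilling n γ)
    (h : ∀ i : Fin n, ∀ j : ℕ, 1 ≤ j → j ≤ γ i → F.box i j = {(i : ℕ) + 1}) :
    F.HasContent γ := by
  refine ⟨fun i => ?_, fun v hv => ?_⟩
  · rw [content_eq_of_box_eq_singleton F h, sum_eq_single i (fun k _ hki => ?_) (by simp)]
    · simp
    · rw [if_neg fun hk => hki (Fin.ext (by omega))]
  · rw [content_eq_of_box_eq_singleton F h]
    exact sum_eq_zero fun i _ => if_neg (by omega)

def canonical (n : ℕ) (γ : Fin n → ℕ) : SVFilling n γ where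
  box i j := if j ≤ γ i then {(i : ℕ) + 1} else ∅
  basement i := by simp
  nonempty i j _ hj := by simp [hj]
  pos i j e he := by
    split_ifs at he <;> simp_all
  outside i j hj := if_neg (Nat.not_le.2 hj)

lemma canonical_box_of_le {i : Fin n} {j : ℕ} (hj : j ≤ γ i) :
    (canonical n γ).box i j = {(i : ℕ) + 1} :=
  if_pos hj

lemma canonical_anchor_of_le {i : Fin n} {j : ℕ} (hj : j ≤ γ i) :
    (canonical n γ).anchor i j = (i : ℕ) + 1 := by
  simp [anchor, canonical_box_of_le hj]

lemma canonical_isSemistandard : (canonical n γ).IsSemistandard := by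
  refine ⟨?_, ?_, fun i i' hii' => ⟨fun hγ m hm => ?_, fun _ m hm hm' => ?_⟩, ?_⟩
  · intro j _ i i' hne e he he'
    simp only [canonical] at he he'
    split_ifs at he he' <;> simp_all [Fin.val_eq_val]
  · intro i j _ hj a ha b hb
    rw [canonical_box_of_le (by omega), mem_singleton] at ha
    rw [canonical_box_of_le hj, mem_singleton] at hb
    omega
  · have : (i : ℕ) < i' := hii'
    rw [canonical_anchor_of_le hm, canonical_anchor_of_le (hm.trans hγ),
      canonical_anchor_of_le (by omega)]
    exact Or.inl ⟨by omega, le_rfl⟩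
  · have : (i : ℕ) < i' := hii'
    rw [canonical_anchor_of_le hm, canonical_anchor_of_le hm', canonical_anchor_of_le (by omega)]
    exact Or.inr ⟨le_rfl, by omega⟩
  · intro i j _ hj e he hne
    rw [canonical_box_of_le hj, mem_singleton] at he
    exact absurd (he.trans (canonical_anchor_of_le hj).symm) hne

end SVFilling

open SVFilling in
theorem stmt1_general (n : ℕ) (γ : Fin n → ℕ) :
    (∀ F : SVFilling n γ, F.IsSemistandard →
      (F.HasContent γ ↔
        ∀ i : Fin n, ∀ j : ℕ, 1 ≤ j → j ≤ γ i → F.box i j = {(i : ℕ) + 1})) ∧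
    (∃! F : {F : SVFilling n γ // F.IsSemistandard},
      (F : SVFilling n γ).HasContent γ) := by
  have hcanonical : ∀ i : Fin n, ∀ j : ℕ, 1 ≤ j → j ≤ γ i →
      (canonical n γ).box i j = {(i : ℕ) + 1} := fun _ _ _ hj => canonical_box_of_le hj
  refine ⟨fun F hF => ⟨F.box_eq_singleton_of_hasContent hF, F.hasContent_of_box_eq_singleton⟩,
    ⟨canonical n γ, canonical_isSemistandard⟩, hasContent_of_box_eq_singleton _ hcanonical, ?_⟩
  rintro ⟨G, hG⟩ hc
  refine Subtype.ext (ext_of_box_eq fun i j hj1 hj => ?_)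
  rw [G.box_eq_singleton_of_hasContent hG hc i j hj1 hj, hcanonical i j hj1 hj]

/-- A semistandard set-valued skyline filling of shape `γ` has content `γ`
iff every box of the shape equals the singleton `{i}` (row index `i`, here `(i:ℕ)+1` since
rows are `0`-indexed by `Fin n`); and there is exactly one semistandard filling of shape `γ`
with content `γ`. -/
theorem stmt1 (n : ℕ) (hn : 1 ≤ n) (γ : Fin n → ℕ) :
    (∀ F : SVFilling n γ, F.IsSemistandard →
      (F.HasContent γ ↔
        ∀ i : Fin n, ∀ j : ℕ, 1 ≤ j → j ≤ γ i → F.box i j = {(i : ℕ) + 1})) ∧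
    (∃! F : {F : SVFilling n γ // F.IsSemistandard},
      (F : SVFilling n γ).HasContent γ) :=
  stmt1_general n γ
end

section
/- Let γ = (γ_1,…,γ_n) be a weak composition and F ∈ SetSkyFill(γ). Then for every row i with γ_i ≥ 1, the anchor entry of the first box of row i equals the basement value: max F(i,1) = i. -/
open Finset MvPolynomial

/-- In a semistandard set-valued skyline filling, the anchor entry of the
first box of each nonempty row equals the basement value of that row (which is `(i:ℕ)+1`
for the row indexed by `i : Fin n`). -/
theorem stmt8 (n : ℕ) (hn : 1 ≤ n) (γ : Fin n → ℕ) (F : SVFilling n γ)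
    (hF : F.IsSemistandard) :
    ∀ i : Fin n, 1 ≤ γ i → F.anchor i 1 = (i : ℕ) + 1 := by
  intro i hγ
  set a := F.anchor i 1 with ha
  -- upper bound: a ≤ i + 1 from (S2)
  have hS2 := hF.2.1
  have hle : a ≤ (i : ℕ) + 1 := by
    refine Finset.sup_le fun e he => ?_
    have := hS2 i 1 le_rfl hγ ((i : ℕ) + 1) ?_ e he
    · simpa using this
    · simp [F.basement i]
  -- positivity: 1 ≤ a
  have hpos : 1 ≤ a := by
    obtain ⟨e, he⟩ := F.nonempty i 1 le_rfl hγ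
    exact le_trans (F.pos i 1 e he) (Finset.le_sup (f := id) he)
  -- suppose a ≤ i, derive contradiction using row r with basement a
  by_contra hne
  have hai : a ≤ (i : ℕ) := by omega
  have hr : a - 1 < n := by omega
  set r : Fin n := ⟨a - 1, hr⟩ with hrdef
  have hri : r < i := by
    simp only [Fin.lt_def]
    have h0 : ((⟨a - 1, hr⟩ : Fin n) : ℕ) = a - 1 := rfl
    omega
  have hbr : F.anchor r 0 = a := by
    simp [SVFilling.anchor, F.basement r]
    have h0 : (r : ℕ) = a - 1 := rfl
    omega
  have h3 := hF.2.2.1 r i hri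
  have hrv : (r : ℕ) = a - 1 := rfl
  rcases le_or_gt (γ i) (γ r) with hcase | hcase
  · have hγr : 1 ≤ γ r := le_trans hγ hcase
    have hr1 : F.anchor r 1 ≤ a := by
      refine Finset.sup_le fun e he => ?_
      have h := hS2 r 1 le_rfl hγr ((r : ℕ) + 1) ?_ e he
      · simp only [id] at h ⊢
        omega
      · simp [F.basement r]
    have h := h3.1 hcase 0 (by omega)
    simp only [zero_add] at h
    rw [hbr] at h
    rw [InvTriple, ← ha] at h
    rcases h with ⟨h1, h2⟩ | ⟨h1, h2⟩ <;> omega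
  · have h := h3.2 hcase 0 (Nat.zero_le _) (by omega)
    simp only [zero_add] at h
    rw [hbr] at h
    have hbi : F.anchor i 0 = (i : ℕ) + 1 := by
      simp [SVFilling.anchor, F.basement i]
    rw [hbi, ← ha] at h
    rw [InvTriple] at h
    rcases h with ⟨h1, h2⟩ | ⟨h1, h2⟩ <;> omega
end

section
/- Let γ and γ' be weak compositions with n parts, F ∈ SetSkyFill(γ) and F' ∈ SetSkyFill(γ'). Suppose that for every column j ≥ 1, the multiset of anchor entries {max F(i,j) : γ_i ≥ j} equals the multiset {max F'(i,j) : γ'_i ≥ j}, and the multiset of free entries occurring in column j of F equals the multiset of free entries occurring in column j of F'. Then γ = γ' and F = F'. In other words, there is at most one semistandard set-valued skyline filling with basement b_i = i having prescribed anchor and free entries in each column. -/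
open Finset MvPolynomial

namespace SVFilling


variable {n : ℕ} {γ γ' : Fin n → ℕ}

lemma anchor_mem (F : SVFilling n γ) {i : Fin n} {j : ℕ} (hj : j ≤ γ i) :
    F.anchor i j ∈ F.box i j := by
  have hne : (F.box i j).Nonempty := by
    rcases Nat.eq_zero_or_pos j with h | h
    · subst h; rw [F.basement]; exact ⟨_, Finset.mem_singleton_self _⟩
    · exact F.nonempty i j h hj
  obtain ⟨b, hb, he⟩ := Finset.exists_mem_eq_sup _ hne id
  rw [anchor, he]; exact hb

lemma le_anchor (F : SVFilling n γ) {i : Fin n} {j e : ℕ} (he : e ∈ F.box i j) :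
    e ≤ F.anchor i j := Finset.le_sup (f := id) he

lemma anchor_zero (F : SVFilling n γ) (i : Fin n) : F.anchor i 0 = (i : ℕ) + 1 := by
  rw [anchor, F.basement]; simp

lemma mem_le_anchor_prev (F : SVFilling n γ) (hF : F.IsSemistandard) {i : Fin n} {j e : ℕ}
    (hj : j + 1 ≤ γ i) (he : e ∈ F.box i (j + 1)) : e ≤ F.anchor i j := by
  have hmem : F.anchor i j ∈ F.box i (j + 1 - 1) := by
    simpa using F.anchor_mem (i := i) (j := j) (le_trans (Nat.le_succ j) hj)
  exact hF.2.1 i (j + 1) (Nat.succ_le_succ (Nat.zero_le _)) hj _ hmem _ he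

lemma anchor_succ_le (F : SVFilling n γ) (hF : F.IsSemistandard) {i : Fin n} {j : ℕ}
    (hj : j + 1 ≤ γ i) : F.anchor i (j + 1) ≤ F.anchor i j :=
  F.mem_le_anchor_prev hF hj (F.anchor_mem hj)

lemma anchor_le_basement (F : SVFilling n γ) (hF : F.IsSemistandard) (i : Fin n) :
    ∀ j, j ≤ γ i → F.anchor i j ≤ (i : ℕ) + 1
  | 0, _ => le_of_eq (F.anchor_zero i)
  | (j + 1), h =>
    le_trans (F.anchor_succ_le hF h) (anchor_le_basement F hF i j (le_trans (Nat.le_succ j) h))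

lemma staircase (F : SVFilling n γ) (hF : F.IsSemistandard) {v u : Fin n} (hvu : v < u)
    (hγ : γ v < γ u) : ∀ m, m ≤ γ v → m + 1 ≤ γ u → F.anchor v m < F.anchor u (m + 1) := by
  intro m
  induction m with
  | zero =>
    intro _ h1
    have ht := (hF.2.2.1 v u hvu).2 hγ 0 (Nat.zero_le _) h1
    simp only [InvTriple] at ht
    rw [F.anchor_zero v, F.anchor_zero u] at ht
    have hvu' : (v : ℕ) < (u : ℕ) := hvu
    rw [F.anchor_zero v]
    omega
  | succ m ih =>
    intro hm1 hm2
    have ihv : F.anchor v m < F.anchor u (m + 1) := ih (by omega) (by omega)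
    have hle : F.anchor v (m + 1) ≤ F.anchor v m := F.anchor_succ_le hF hm1
    have ht := (hF.2.2.1 v u hvu).2 hγ (m + 1) hm1 hm2
    simp only [InvTriple] at ht
    omega

lemma claimA (F : SVFilling n γ) (hF : F.IsSemistandard) {v u : Fin n} (hvu : v < u) {j : ℕ}
    (hu : j + 1 ≤ γ u) (hv : j ≤ γ v) (hb : F.anchor u (j + 1) ≤ F.anchor v j) :
    j + 1 ≤ γ v ∧ F.anchor u (j + 1) < F.anchor v (j + 1) := by
  rcases lt_or_ge (γ v) (γ u) with h | h
  · exact absurd (F.staircase hF hvu h j hv hu) (by omega)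
  · refine ⟨le_trans hu h, ?_⟩
    have ht := (hF.2.2.1 v u hvu).1 h j hu
    simp only [InvTriple] at ht
    omega

lemma anchor_step (F : SVFilling n γ) (F' : SVFilling n γ')
    (hF : F.IsSemistandard) (hF' : F'.IsSemistandard) {j : ℕ}
    (hprev : ∀ i : Fin n, (j ≤ γ i ↔ j ≤ γ' i) ∧ (j ≤ γ i → F.anchor i j = F'.anchor i j))
    (hanc : ((Finset.univ.filter (fun i : Fin n => j + 1 ≤ γ i)).val.map
        (fun i => F.anchor i (j + 1))) =
      ((Finset.univ.filter (fun i : Fin n => j + 1 ≤ γ' i)).val.map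
        (fun i => F'.anchor i (j + 1)))) :
    ∀ i : Fin n, (j + 1 ≤ γ i ↔ j + 1 ≤ γ' i) ∧
      (j + 1 ≤ γ i → F.anchor i (j + 1) = F'.anchor i (j + 1)) := by
  have memF : ∀ b : ℕ, (∃ i, j + 1 ≤ γ i ∧ F.anchor i (j + 1) = b) ↔
      (∃ i, j + 1 ≤ γ' i ∧ F'.anchor i (j + 1) = b) := by
    intro b
    constructor
    · rintro ⟨i, hi, hb⟩
      have hm : b ∈ (Finset.univ.filter fun i : Fin n => j + 1 ≤ γ' i).val.map
          (fun i => F'.anchor i (j + 1)) := by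
        rw [← hanc]
        exact Multiset.mem_map.2 ⟨i, by simpa using hi, hb⟩
      obtain ⟨i', hi', hb'⟩ := Multiset.mem_map.1 hm
      exact ⟨i', by simpa using hi', hb'⟩
    · rintro ⟨i, hi, hb⟩
      have hm : b ∈ (Finset.univ.filter fun i : Fin n => j + 1 ≤ γ i).val.map
          (fun i => F.anchor i (j + 1)) := by
        rw [hanc]
        exact Multiset.mem_map.2 ⟨i, by simpa using hi, hb⟩
      obtain ⟨i', hi', hb'⟩ := Multiset.mem_map.1 hm
      exact ⟨i', by simpa using hi', hb'⟩
  have Qmain : ∀ b : ℕ, ∀ u v : Fin n, j + 1 ≤ γ u → j + 1 ≤ γ' v →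
      F.anchor u (j + 1) = b → F'.anchor v (j + 1) = b → u = v := by
    have key : ∀ k b : ℕ, n < b + k → ∀ u v : Fin n, j + 1 ≤ γ u → j + 1 ≤ γ' v →
        F.anchor u (j + 1) = b → F'.anchor v (j + 1) = b → u = v := by
      intro k
      induction k with
      | zero =>
        intro b hb u v hu _ hbu _
        exfalso
        have h1 := F.anchor_le_basement hF u (j + 1) hu
        have h2 : (u : ℕ) < n := u.isLt
        omega
      | succ k ih =>
        intro b hb u v hu hv hbu hbv
        rcases lt_trichotomy u v with h | h | h
        · -- u < v : apply claimA in F'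
          have hju : j ≤ γ u := by omega
          have hju' : j ≤ γ' u := (hprev u).1.1 hju
          have hb1 : F'.anchor v (j + 1) ≤ F'.anchor u j := by
            have h1 : F.anchor u (j + 1) ≤ F.anchor u j := F.anchor_succ_le hF hu
            rw [hbv, ← hbu, ← (hprev u).2 hju]
            exact h1
          obtain ⟨huJ, hlt⟩ := F'.claimA hF' h hv hju' hb1
          obtain ⟨w, hw, hwa⟩ := (memF (F'.anchor u (j + 1))).2 ⟨u, huJ, rfl⟩
          have hwu : w = u := ih (F'.anchor u (j + 1)) (by omega) w u hw huJ hwa rfl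
          rw [hwu] at hwa
          omega
        · exact h
        · -- v < u : apply claimA in F
          have hjv' : j ≤ γ' v := by omega
          have hjv : j ≤ γ v := (hprev v).1.2 hjv'
          have hb1 : F.anchor u (j + 1) ≤ F.anchor v j := by
            have h1 : F'.anchor v (j + 1) ≤ F'.anchor v j := F'.anchor_succ_le hF' hv
            rw [hbu, ← hbv, (hprev v).2 hjv]
            exact h1
          obtain ⟨hvJ, hlt⟩ := F.claimA hF h hu hjv hb1
          obtain ⟨w, hw, hwa⟩ := (memF (F.anchor v (j + 1))).1 ⟨v, hvJ, rfl⟩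
          have hwv : v = w := ih (F.anchor v (j + 1)) (by omega) v w hvJ hw rfl hwa
          rw [← hwv] at hwa
          omega
    intro b
    exact key (n + 1) b (by omega)
  intro i
  constructor
  · constructor
    · intro hi
      obtain ⟨v, hv, hbv⟩ := (memF (F.anchor i (j + 1))).1 ⟨i, hi, rfl⟩
      have h := Qmain _ i v hi hv rfl hbv
      rwa [h]
    · intro hi
      obtain ⟨w, hw, hbw⟩ := (memF (F'.anchor i (j + 1))).2 ⟨i, hi, rfl⟩
      have h := Qmain _ w i hw hi hbw rfl
      rwa [← h]
  · intro hi
    obtain ⟨v, hv, hbv⟩ := (memF (F.anchor i (j + 1))).1 ⟨i, hi, rfl⟩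
    have h := Qmain _ i v hi hv rfl hbv
    subst h
    exact hbv.symm

/-- The condition pinning down the row of a free entry. -/
lemma free_cond (F : SVFilling n γ) (hF : F.IsSemistandard) {i : Fin n} {j e : ℕ} (h1 : 1 ≤ j)
    (he : e ∈ (F.box i j).erase (F.anchor i j)) :
    j ≤ γ i ∧ e < F.anchor i j ∧ (j = γ i ∨ F.anchor i (j + 1) ≤ e) := by
  rw [Finset.mem_erase] at he
  have hin : j ≤ γ i := by
    by_contra hc
    rw [F.outside i j (by omega)] at he
    exact absurd he.2 (Finset.notMem_empty e)
  refine ⟨hin, lt_of_le_of_ne (F.le_anchor he.2) he.1, ?_⟩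
  rcases eq_or_lt_of_le hin with h | h
  · exact Or.inl h
  · refine Or.inr ?_
    have hmem : e ∈ F.box i (j + 1 - 1) := by simpa using he.2
    exact hF.2.1 i (j + 1) (by omega) h _ hmem _ (F.anchor_mem h)

lemma free_transfer (F : SVFilling n γ) (F' : SVFilling n γ')
    (hF : F.IsSemistandard) (hF' : F'.IsSemistandard) (hγ : γ = γ')
    (hanchEq : ∀ (i : Fin n) (m : ℕ), F.anchor i m = F'.anchor i m)
    {j : ℕ} (h1 : 1 ≤ j)
    (hfr : ∀ e : ℕ, (∃ i, e ∈ (F.box i j).erase (F.anchor i j)) →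
      ∃ i, e ∈ (F'.box i j).erase (F'.anchor i j))
    (i : Fin n) : (F.box i j).erase (F.anchor i j) ⊆ (F'.box i j).erase (F'.anchor i j) := by
  intro e he
  obtain ⟨i'', he''⟩ := hfr e ⟨i, he⟩
  obtain ⟨hin, hlt, hor⟩ := F.free_cond hF h1 he
  obtain ⟨hin'', hlt'', hor''⟩ := F'.free_cond hF' h1 he''
  have hmemF : e ∈ F.box i j := (Finset.mem_erase.1 he).2
  have hneF : e ≠ F.anchor i j := (Finset.mem_erase.1 he).1
  have hmemF' : e ∈ F'.box i'' j := (Finset.mem_erase.1 he'').2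
  have hneF' : e ≠ F'.anchor i'' j := (Finset.mem_erase.1 he'').1
  rcases lt_trichotomy i i'' with h | h | h
  · -- i < i'' : contradicts S4 of F' at (i'', e)
    exfalso
    refine hF'.2.2.2 i'' j h1 hin'' e hmemF' hneF' i h (hγ ▸ hin) ?_
    rw [← hanchEq i j, ← hanchEq i (j + 1), ← hγ]
    exact ⟨hlt, hor⟩
  · rwa [← h] at he''
  · -- i'' < i : contradicts S4 of F at (i, e)
    exfalso
    refine hF.2.2.2 i j h1 hin e hmemF hneF i'' h (hγ ▸ hin'') ?_
    rw [hanchEq i'' j, hanchEq i'' (j + 1), hγ]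
    exact ⟨hlt'', hor''⟩

end SVFilling

/-- A semistandard set-valued skyline filling with basement `b_i = i` is
determined (including its shape) by the multiset of anchor entries and the multiset of free
entries of each of its columns. -/
theorem stmt9 (n : ℕ) (hn : 1 ≤ n) (γ γ' : Fin n → ℕ)
    (F : SVFilling n γ) (F' : SVFilling n γ')
    (hF : F.IsSemistandard) (hF' : F'.IsSemistandard)
    (hanchor : ∀ j : ℕ, 1 ≤ j →
      ((Finset.univ.filter (fun i : Fin n => j ≤ γ i)).val.map (fun i => F.anchor i j)) =
      ((Finset.univ.filter (fun i : Fin n => j ≤ γ' i)).val.map (fun i => F'.anchor i j)))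
    (hfree : ∀ j : ℕ, 1 ≤ j →
      (∑ i : Fin n, ((F.box i j).erase (F.anchor i j)).val) =
      (∑ i : Fin n, ((F'.box i j).erase (F'.anchor i j)).val)) :
    γ = γ' ∧ F.box = F'.box := by
  have hAll : ∀ j : ℕ, ∀ i : Fin n,
      (j ≤ γ i ↔ j ≤ γ' i) ∧ (j ≤ γ i → F.anchor i j = F'.anchor i j) := by
    intro j
    induction j with
    | zero =>
      intro i
      exact ⟨⟨fun _ => Nat.zero_le _, fun _ => Nat.zero_le _⟩,
        fun _ => by rw [F.anchor_zero, F'.anchor_zero]⟩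
    | succ j ih => exact SVFilling.anchor_step F F' hF hF' ih (hanchor (j + 1) (by omega))
  have hg : γ = γ' := by
    funext i
    have h1 := (hAll (γ i) i).1.1 le_rfl
    have h2 := (hAll (γ' i) i).1.2 le_rfl
    omega
  have hanchEq : ∀ (i : Fin n) (m : ℕ), F.anchor i m = F'.anchor i m := by
    intro i m
    rcases le_or_gt m (γ i) with h | h
    · exact (hAll m i).2 h
    · rw [SVFilling.anchor, SVFilling.anchor, F.outside i m h, F'.outside i m (hg ▸ h)]
  refine ⟨hg, ?_⟩
  funext i j
  rcases Nat.eq_zero_or_pos j with h0 | h1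
  · subst h0; rw [F.basement, F'.basement]
  rcases le_or_gt j (γ i) with hin | hout
  · have hin' : j ≤ γ' i := hg ▸ hin
    have hmemsum : ∀ e : ℕ, (∃ i0, e ∈ (F.box i0 j).erase (F.anchor i0 j)) ↔
        (∃ i0, e ∈ (F'.box i0 j).erase (F'.anchor i0 j)) := by
      intro e
      have hfe := hfree j h1
      constructor
      · rintro ⟨i0, h⟩
        have hm : e ∈ ∑ i0 : Fin n, ((F'.box i0 j).erase (F'.anchor i0 j)).val := by
          rw [← hfe]
          exact Multiset.mem_sum.2 ⟨i0, Finset.mem_univ _, Finset.mem_def.1 h⟩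
        obtain ⟨i1, _, h1'⟩ := Multiset.mem_sum.1 hm
        exact ⟨i1, Finset.mem_def.2 h1'⟩
      · rintro ⟨i0, h⟩
        have hm : e ∈ ∑ i0 : Fin n, ((F.box i0 j).erase (F.anchor i0 j)).val := by
          rw [hfe]
          exact Multiset.mem_sum.2 ⟨i0, Finset.mem_univ _, Finset.mem_def.1 h⟩
        obtain ⟨i1, _, h1'⟩ := Multiset.mem_sum.1 hm
        exact ⟨i1, Finset.mem_def.2 h1'⟩
    have he : (F.box i j).erase (F.anchor i j) = (F'.box i j).erase (F'.anchor i j) :=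
      Finset.Subset.antisymm
        (SVFilling.free_transfer F F' hF hF' hg hanchEq h1 (fun e h => (hmemsum e).1 h) i)
        (SVFilling.free_transfer F' F hF' hF hg.symm (fun i0 m => (hanchEq i0 m).symm) h1
          (fun e h => (hmemsum e).2 h) i)
    calc F.box i j = insert (F.anchor i j) ((F.box i j).erase (F.anchor i j)) :=
          (Finset.insert_erase (F.anchor_mem hin)).symm
      _ = insert (F'.anchor i j) ((F'.box i j).erase (F'.anchor i j)) := by
          rw [he, hanchEq]
      _ = F'.box i j := Finset.insert_erase (F'.anchor_mem hin')
  · rw [F.outside i j hout, F'.outside i j (hg ▸ hout)]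
end

section
/- Let α be a composition, b_1,…,b_m positive integers, and let i_1 < i_2 < … < i_m and j_1 < j_2 < … < j_m be two strictly increasing sequences of positive integers. Then the number of T ∈ SetCompTab(α) whose content is supported on {i_1,…,i_m} with exactly b_l occurrences of i_l for each l equals the number of T ∈ SetCompTab(α) whose content is supported on {j_1,…,j_m} with exactly b_l occurrences of j_l for each l. Equivalently, the quasisymmetric Grothendieck function G_α = Σ_{T ∈ SetCompTab(α)} β^{|T|−|α|} x^{content(T)} is a quasisymmetric function. -/
open Finset MvPolynomial

/-- A set-valued filling of the composition shape `α` (row `i : Fin k` is the `(i+1)`-st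
row): box `(i, j)` for `1 ≤ j ≤ α i` carries a nonempty finite set of positive integers;
boxes outside the shape (including the column `j = 0`: there is no basement) are empty. -/
structure SVCompTab (k : ℕ) (α : Fin k → ℕ) where
  box : Fin k → ℕ → Finset ℕ
  nonempty : ∀ i : Fin k, ∀ j : ℕ, 1 ≤ j → j ≤ α i → (box i j).Nonempty
  pos : ∀ i : Fin k, ∀ j : ℕ, ∀ e ∈ box i j, 1 ≤ e
  outside : ∀ i : Fin k, ∀ j : ℕ, (j = 0 ∨ α i < j) → box i j = ∅

namespace SVCompTab

variable {k : ℕ} {α : Fin k → ℕ}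

/-- The anchor (= largest) entry of box `(i, j)`. -/
def anchor (T : SVCompTab k α) (i : Fin k) (j : ℕ) : ℕ := (T.box i j).sup id

/-- Semistandardness conditions (Q1)-(Q3) for set-valued composition tableaux. -/
def IsSemistandard (T : SVCompTab k α) : Prop :=
  (∀ i : Fin k, ∀ j : ℕ, 2 ≤ j → j ≤ α i →
      ∀ a ∈ T.box i (j - 1), ∀ b ∈ T.box i j, b ≤ a) ∧
  (∀ i i' : Fin k, i < i' → 1 ≤ α i → 1 ≤ α i' → T.anchor i 1 < T.anchor i' 1) ∧
  (∀ j : ℕ, 1 ≤ j → ∀ i i' : Fin k, i ≠ i' → j ≤ α i → j ≤ α i' →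
      T.anchor i j ≠ T.anchor i' j) ∧
  (∀ i i' : Fin k, i < i' →
      (α i' ≤ α i → ∀ m : ℕ, 1 ≤ m → m + 1 ≤ α i' →
        InvTriple (T.anchor i' (m + 1)) (T.anchor i (m + 1)) (T.anchor i m)) ∧
      (α i < α i' → ∀ m : ℕ, 1 ≤ m → m ≤ α i → m + 1 ≤ α i' →
        InvTriple (T.anchor i m) (T.anchor i' (m + 1)) (T.anchor i' m))) ∧
  (∀ i : Fin k, ∀ j : ℕ, 1 ≤ j → j ≤ α i → ∀ e ∈ T.box i j, e ≠ T.anchor i j →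
      ∀ i' : Fin k, i' < i → j ≤ α i' →
        ¬ (e < T.anchor i' j ∧ (j = α i' ∨ T.anchor i' (j + 1) ≤ e)))

/-- The number of boxes of `T` containing the value `v`. -/
def content (T : SVCompTab k α) (v : ℕ) : ℕ :=
  ∑ i : Fin k, ((Finset.Icc 1 (α i)).filter (fun j => v ∈ T.box i j)).card

/-- `|T|`, the total number of entries of `T`. -/
def size (T : SVCompTab k α) : ℕ :=
  ∑ i : Fin k, ∑ j ∈ Finset.Icc 1 (α i), (T.box i j).card

end SVCompTab

/-!
A tableau whose entries all lie in `{i_1 < ⋯ < i_m}` can be relabelled entrywise by the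
order isomorphism `i_l ↦ j_l`. Conditions (Q1)–(Q3) only compare entries with `<`, `≤` and `=`,
and the anchor of a box is carried to the anchor of the relabelled box, so relabelling preserves
semistandardness; it moves the content from the `i_l` to the `j_l`, and relabelling back by
`j_l ↦ i_l` undoes it.
-/

open Function

lemma InvTriple.map {f : ℕ → ℕ} {S : Set ℕ} (hf : StrictMonoOn f S) {x y z : ℕ}
    (hx : x ∈ S) (hy : y ∈ S) (hz : z ∈ S) (h : InvTriple x y z) :
    InvTriple (f x) (f y) (f z) := by
  rcases h with ⟨h1, h2⟩ | ⟨h1, h2⟩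
  · exact Or.inl ⟨(hf.lt_iff_lt hz hx).2 h1, (hf.le_iff_le hy hz).2 h2⟩
  · exact Or.inr ⟨(hf.le_iff_le hy hz).2 h1, (hf.lt_iff_lt hx hy).2 h2⟩

section ExtendId

variable {ι : Type*} {u v : ι → ℕ}

lemma one_le_extend_id (hv1 : ∀ l, 1 ≤ v l) {x : ℕ} (hx : 1 ≤ x) :
    1 ≤ extend u v id x := by
  classical
  by_cases h : ∃ l, u l = x
  · obtain ⟨l, rfl⟩ := h
    rw [Function.extend_def, dif_pos ⟨l, rfl⟩]
    exact hv1 _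
  · rwa [extend_apply' _ _ _ h]

lemma strictMonoOn_extend_id [LinearOrder ι] (hu : StrictMono u) (hv : StrictMono v) :
    StrictMonoOn (extend u v id) (Set.range u) := by
  rintro _ ⟨a, rfl⟩ _ ⟨c, rfl⟩ h
  rw [hu.injective.extend_apply, hu.injective.extend_apply]
  exact hv (hu.lt_iff_lt.1 h)

lemma image_extend_id_range (hu : Injective u) :
    extend u v id '' Set.range u = Set.range v := by
  rw [← Set.range_comp, extend_comp hu]

lemma leftInvOn_extend_id (hu : Injective u) (hv : Injective v) :
    Set.LeftInvOn (extend v u id) (extend u v id) (Set.range u) := by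
  rintro _ ⟨a, rfl⟩
  rw [hu.extend_apply, hv.extend_apply]

end ExtendId

namespace SVCompTab

variable {k : ℕ} {α : Fin k → ℕ}

lemma ext {T S : SVCompTab k α} (h : T.box = S.box) : T = S := by
  cases T
  cases S
  cases h
  rfl

lemma anchor_mem (T : SVCompTab k α) {i : Fin k} {j : ℕ} (h1 : 1 ≤ j) (h2 : j ≤ α i) :
    T.anchor i j ∈ T.box i j := by
  obtain ⟨e, he, hx⟩ := exists_mem_eq_sup (T.box i j) (T.nonempty i j h1 h2) id
  rw [anchor, hx]
  exact he

def EntriesIn (T : SVCompTab k α) (S : Set ℕ) : Prop :=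
  ∀ i j, ∀ e ∈ T.box i j, e ∈ S

lemma EntriesIn.anchor_mem {T : SVCompTab k α} {S : Set ℕ} (hT : T.EntriesIn S) {i : Fin k}
    {j : ℕ} (h1 : 1 ≤ j) (h2 : j ≤ α i) : T.anchor i j ∈ S :=
  hT i j _ (T.anchor_mem h1 h2)

def map (f : ℕ → ℕ) (hf : ∀ x, 1 ≤ x → 1 ≤ f x) (T : SVCompTab k α) : SVCompTab k α where
  box i j := (T.box i j).image f
  nonempty i j h1 h2 := (T.nonempty i j h1 h2).image f
  pos i j e he := by
    obtain ⟨x, hx, rfl⟩ := mem_image.1 he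
    exact hf x (T.pos i j x hx)
  outside i j h := by rw [T.outside i j h, image_empty]

section Map

variable {f : ℕ → ℕ} {hf : ∀ x, 1 ≤ x → 1 ≤ f x} {T : SVCompTab k α} {S : Set ℕ}

lemma anchor_map (hT : T.EntriesIn S) (hfS : MonotoneOn f S) {i : Fin k} {j : ℕ}
    (h1 : 1 ≤ j) (h2 : j ≤ α i) : (T.map f hf).anchor i j = f (T.anchor i j) := by
  refine le_antisymm (Finset.sup_le fun e' he' => ?_) ?_
  · obtain ⟨e, he, rfl⟩ := mem_image.1 he'
    exact hfS (hT i j e he) (hT.anchor_mem h1 h2) (le_sup (f := id) he)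
  · exact le_sup (f := id) (mem_image_of_mem f (T.anchor_mem h1 h2))

theorem IsSemistandard.map (hT : T.EntriesIn S) (hfS : StrictMonoOn f S)
    (hss : T.IsSemistandard) : (T.map f hf).IsSemistandard := by
  obtain ⟨q1, q2a, q2b, q2c, q3⟩ := hss
  have han : ∀ {i j}, 1 ≤ j → j ≤ α i → (T.map f hf).anchor i j = f (T.anchor i j) :=
    anchor_map hT hfS.monotoneOn
  have hA : ∀ {i j}, 1 ≤ j → j ≤ α i → T.anchor i j ∈ S := hT.anchor_mem
  refine ⟨?_, ?_, ?_, fun i i' hii => ⟨?_, ?_⟩, ?_⟩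
  · intro i j h2 hj a' ha' b' hb'
    obtain ⟨a, ha, rfl⟩ := mem_image.1 ha'
    obtain ⟨b, hb, rfl⟩ := mem_image.1 hb'
    exact hfS.monotoneOn (hT i j b hb) (hT i (j - 1) a ha) (q1 i j h2 hj a ha b hb)
  · intro i i' hii h1 h1'
    rw [han le_rfl h1, han le_rfl h1']
    exact hfS (hA le_rfl h1) (hA le_rfl h1') (q2a i i' hii h1 h1')
  · intro j h1 i i' hne hji hji'
    rw [han h1 hji, han h1 hji']
    exact (hfS.injOn (hA h1 hji) (hA h1 hji')).mt (q2b j h1 i i' hne hji hji')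
  · intro hle m hm hm1
    rw [han (by omega) hm1, han (by omega) (hm1.trans hle), han hm (by omega)]
    exact ((q2c i i' hii).1 hle m hm hm1).map hfS (hA (by omega) hm1)
      (hA (by omega) (hm1.trans hle)) (hA hm (by omega))
  · intro hlt m hm hmi hm1
    rw [han hm hmi, han (by omega) hm1, han hm (by omega)]
    exact ((q2c i i' hii).2 hlt m hm hmi hm1).map hfS (hA hm hmi) (hA (by omega) hm1)
      (hA hm (by omega))
  · intro i j h1 h2 e' he' hne i' hii' hji' ⟨hlt, hcase⟩
    obtain ⟨e, he, rfl⟩ := mem_image.1 he'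
    have heS := hT i j e he
    rw [han h1 h2] at hne
    rw [han h1 hji', hfS.lt_iff_lt heS (hA h1 hji')] at hlt
    refine q3 i j h1 h2 e he (fun h => hne (congrArg f h)) i' hii' hji' ⟨hlt, ?_⟩
    rcases hji'.eq_or_lt with hj | hj
    · exact Or.inl hj
    · refine Or.inr (hcase.elim (fun h => absurd h hj.ne) fun h => ?_)
      rwa [han (by omega) hj, hfS.le_iff_le (hA (by omega) hj) heS] at h

lemma content_map_apply (hT : T.EntriesIn S) (hfS : Set.InjOn f S) {x : ℕ} (hx : x ∈ S) :
    (T.map f hf).content (f x) = T.content x := by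
  refine sum_congr rfl fun i _ => congrArg card (filter_congr fun j _ => ?_)
  refine ⟨fun hmem => ?_, mem_image_of_mem f⟩
  obtain ⟨e, he, hfe⟩ := mem_image.1 hmem
  rwa [← hfS (hT i j e he) hx hfe]

lemma content_map_eq_zero (hT : T.EntriesIn S) {w : ℕ} (hw : w ∉ f '' S) :
    (T.map f hf).content w = 0 := by
  refine sum_eq_zero fun i _ => card_eq_zero.2 (filter_eq_empty_iff.2 fun j _ hmem => hw ?_)
  obtain ⟨e, he, rfl⟩ := mem_image.1 hmem
  exact ⟨e, hT i j e he, rfl⟩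

lemma map_map_of_leftInvOn {g : ℕ → ℕ} {hg : ∀ x, 1 ≤ x → 1 ≤ g x} (hT : T.EntriesIn S)
    (hgf : Set.LeftInvOn g f S) : (T.map f hf).map g hg = T := by
  refine ext (funext₂ fun i j => ?_)
  change ((T.box i j).image f).image g = T.box i j
  rw [image_image]
  exact (image_congr fun e he => hgf (hT i j e he)).trans image_id

end Map

lemma entriesIn_range_of_content_eq_zero {ι : Type*} {T : SVCompTab k α} {u : ι → ℕ}
    (h0 : ∀ w, 1 ≤ w → (∀ l, w ≠ u l) → T.content w = 0) : T.EntriesIn (Set.range u) := by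
  intro i j e he
  by_contra hu
  have hj : 1 ≤ j ∧ j ≤ α i := by
    by_contra hj
    rw [T.outside i j (by omega)] at he
    exact notMem_empty e he
  have hmem : j ∈ (Icc 1 (α i)).filter (fun j => e ∈ T.box i j) :=
    mem_filter.2 ⟨mem_Icc.2 hj, he⟩
  have hpos := card_pos.2 ⟨j, hmem⟩
  have hzero := sum_eq_zero_iff.1
    (h0 e (T.pos i j e he) fun l hl => hu ⟨l, hl.symm⟩) i (mem_univ i)
  omega

def HasContent {ι : Type*} (T : SVCompTab k α) (u b : ι → ℕ) : Prop :=
  (∀ l, T.content (u l) = b l) ∧ (∀ w, 1 ≤ w → (∀ l, w ≠ u l) → T.content w = 0)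

section Relabel

variable {ι : Type*} [LinearOrder ι] {u v : ι → ℕ} {b : ι → ℕ} {T : SVCompTab k α}

/-- Replace each entry `u l` of `T` by `v l`, leaving entries outside the range of `u` fixed. -/
noncomputable abbrev relabel (u v : ι → ℕ) (hv1 : ∀ l, 1 ≤ v l) (T : SVCompTab k α) :
    SVCompTab k α :=
  T.map (extend u v id) fun _ => one_le_extend_id hv1

lemma HasContent.relabel (hu : StrictMono u) (hv : StrictMono v) (hv1 : ∀ l, 1 ≤ v l)
    (hT : T.HasContent u b) : (T.relabel u v hv1).HasContent v b := by
  have hE := entriesIn_range_of_content_eq_zero hT.2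
  refine ⟨fun l => ?_, fun w _ hw => content_map_eq_zero hE ?_⟩
  · rw [← hu.injective.extend_apply v id l,
      content_map_apply hE (strictMonoOn_extend_id hu hv).injOn ⟨l, rfl⟩, hT.1 l]
  · rw [image_extend_id_range hu.injective]
    rintro ⟨l, rfl⟩
    exact hw l rfl

lemma relabel_relabel (hu : StrictMono u) (hv : StrictMono v) (hu1 : ∀ l, 1 ≤ u l)
    (hv1 : ∀ l, 1 ≤ v l) (hT : T.EntriesIn (Set.range u)) :
    (T.relabel u v hv1).relabel v u hu1 = T :=
  map_map_of_leftInvOn hT (leftInvOn_extend_id hu.injective hv.injective)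

noncomputable def relabelEquiv (hu : StrictMono u) (hv : StrictMono v) (hu1 : ∀ l, 1 ≤ u l)
    (hv1 : ∀ l, 1 ≤ v l) (b : ι → ℕ) :
    {T : SVCompTab k α // T.IsSemistandard ∧ T.HasContent u b} ≃
      {T : SVCompTab k α // T.IsSemistandard ∧ T.HasContent v b} where
  toFun T := ⟨T.1.relabel u v hv1,
    T.2.1.map (entriesIn_range_of_content_eq_zero T.2.2.2) (strictMonoOn_extend_id hu hv),
    T.2.2.relabel hu hv hv1⟩
  invFun T := ⟨T.1.relabel v u hu1,
    T.2.1.map (entriesIn_range_of_content_eq_zero T.2.2.2) (strictMonoOn_extend_id hv hu),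
    T.2.2.relabel hv hu hu1⟩
  left_inv T := Subtype.ext <|
    relabel_relabel hu hv hu1 hv1 (entriesIn_range_of_content_eq_zero T.2.2.2)
  right_inv T := Subtype.ext <|
    relabel_relabel hv hu hv1 hu1 (entriesIn_range_of_content_eq_zero T.2.2.2)

end Relabel

end SVCompTab

theorem stmt11_general (k m : ℕ) (α : Fin k → ℕ)
    (b : Fin m → ℕ)
    (iseq jseq : Fin m → ℕ) (hi : StrictMono iseq) (hj : StrictMono jseq)
    (hi1 : ∀ l, 1 ≤ iseq l) (hj1 : ∀ l, 1 ≤ jseq l) :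
    Nat.card {T : SVCompTab k α // T.IsSemistandard ∧
        (∀ l : Fin m, T.content (iseq l) = b l) ∧
        (∀ v : ℕ, 1 ≤ v → (∀ l : Fin m, v ≠ iseq l) → T.content v = 0)} =
    Nat.card {T : SVCompTab k α // T.IsSemistandard ∧
        (∀ l : Fin m, T.content (jseq l) = b l) ∧
        (∀ v : ℕ, 1 ≤ v → (∀ l : Fin m, v ≠ jseq l) → T.content v = 0)} :=
  Nat.card_congr (SVCompTab.relabelEquiv hi hj hi1 hj1 b)

/-- (Quasisymmetry of the quasisymmetric Grothendieck function `G_α`.)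
For a composition `α`, positive multiplicities `b_1, …, b_m`, and two strictly increasing
sequences of positive values `i_1 < … < i_m` and `j_1 < … < j_m`, the semistandard
set-valued composition tableaux of shape `α` whose content is supported on `{i_1, …, i_m}`
with exactly `b_l` occurrences of `i_l` are equinumerous with those whose content is
supported on `{j_1, …, j_m}` with exactly `b_l` occurrences of `j_l`. -/
theorem stmt11 (k m : ℕ) (hk : 1 ≤ k) (α : Fin k → ℕ) (hα : ∀ i, 1 ≤ α i)
    (b : Fin m → ℕ) (hb : ∀ l, 1 ≤ b l)
    (iseq jseq : Fin m → ℕ) (hi : StrictMono iseq) (hj : StrictMono jseq)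
    (hi1 : ∀ l, 1 ≤ iseq l) (hj1 : ∀ l, 1 ≤ jseq l) :
    Nat.card {T : SVCompTab k α // T.IsSemistandard ∧
        (∀ l : Fin m, T.content (iseq l) = b l) ∧
        (∀ v : ℕ, 1 ≤ v → (∀ l : Fin m, v ≠ iseq l) → T.content v = 0)} =
    Nat.card {T : SVCompTab k α // T.IsSemistandard ∧
        (∀ l : Fin m, T.content (jseq l) = b l) ∧
        (∀ v : ℕ, 1 ≤ v → (∀ l : Fin m, v ≠ jseq l) → T.content v = 0)} :=
  stmt11_general k m α b iseq jseq hi hj hi1 hj1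
end
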